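/- Every simply laced root system has a base, i.e., a linearly independent subset with nonpositive pairwise inner products between distinct elements, whose integer span contains the whole root system. -/

import Mathlib

open RealInnerProductSpace

variable {E : Type*} [NormedAddCommGroup E] [InnerProductSpace ℝ E]

/-- A simply laced root system: a nonempty finite set of vectors with `⟪x,x⟫ = 2`,
integer pairwise inner products, closed under `x ↦ x - ⟪x,y⟫ y`. -/
def IsSLRS (Φ : Set E) : Prop :=
  Φ.Nonempty ∧ Φ.Finite ∧
    ∀ x ∈ Φ, ∀ y ∈ Φ,
      ⟪x, x⟫ = 2 ∧ (∃ m : ℤ, ⟪x, y⟫ = (m : ℝ)) ∧ x - ⟪x, y⟫ • y ∈ Φ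

/-- A base of a simply laced root system: a linearly independent subset with nonpositive
inner products between distinct elements, whose integer span contains `Φ`. -/
def IsBase (Φ X : Set E) : Prop :=
  X ⊆ Φ ∧ LinearIndependent ℝ ((↑) : X → E) ∧
    (∀ x ∈ X, ∀ y ∈ X, x ≠ y → ⟪x, y⟫ ≤ 0) ∧
    ∀ v ∈ Φ, v ∈ Submodule.span ℤ X

/-!
Pick a linear form `f` that vanishes on no root (finitely many hyperplanes do not cover the
space) and take as simple roots the `f`-positive roots that are not the sum of two `f`-positive
roots. Induction on the value of `f` writes every positive root as a sum of simple roots. Two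
distinct roots with `⟪x, y⟫ > 0` have `⟪x, y⟫ = 1`, so `x - y` is a root, which would make one of
two simple roots decomposable; hence simple roots are pairwise obtuse, and pairwise obtuse vectors
in an open half-space are linearly independent.
-/

lemma linearIndependent_of_pairwise_inner_nonpos {X : Set E} (f : Module.Dual ℝ E)
    (hpos : ∀ x ∈ X, 0 < f x) (hobtuse : X.Pairwise fun x y ↦ ⟪x, y⟫ ≤ 0) :
    LinearIndependent ℝ ((↑) : X → E) :=
  LinearMap.BilinForm.linearIndependent_of_pairwise_le_zero (innerₗ E)
    (fun _ hx ↦ real_inner_self_pos.mpr hx) f _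
    (fun x ↦ hpos x x.2) (fun x y hxy ↦ hobtuse x.2 y.2 (Subtype.coe_ne_coe.mpr hxy))

open IsAddIndecomposable

section SimpleRoots

variable {M : Type*} [AddCommGroup M]

def simpleRoots (Φ : Set M) (f : M →+ ℝ) : Set M :=
  Subtype.val '' baseOf ((↑) : Φ → M) f

lemma simpleRoots_subset (Φ : Set M) (f : M →+ ℝ) : simpleRoots Φ f ⊆ Φ :=
  Set.image_subset_iff.mpr fun x _ ↦ x.2

lemma pos_of_mem_simpleRoots {Φ : Set M} {f : M →+ ℝ} {x : M} (hx : x ∈ simpleRoots Φ f) :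
    0 < f x := by
  obtain ⟨x, ⟨hx, -⟩, rfl⟩ := hx
  exact hx

lemma sub_notMem_of_mem_simpleRoots {Φ : Set M} {f : M →+ ℝ} {x y : M} (h0 : (0 : M) ∉ Φ)
    (hx : x ∈ simpleRoots Φ f) (hy : y ∈ simpleRoots Φ f) (hpos : 0 < f (x - y)) :
    x - y ∉ Φ := by
  obtain ⟨x, ⟨-, hx⟩, rfl⟩ := hx
  obtain ⟨y, ⟨hypos, -⟩, rfl⟩ := hy
  intro hsub
  rcases hx ⟨_, hsub⟩ hpos y hypos (sub_add_cancel _ _).symm with h | h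
  · exact h0 (h ▸ hsub)
  · exact h0 (h ▸ y.2)

lemma mem_span_simpleRoots_of_pos {Φ : Set M} [Finite Φ] {f : M →+ ℝ} {x : M} (hx : x ∈ Φ)
    (hfx : 0 < f x) : x ∈ Submodule.span ℤ (simpleRoots Φ f) := by
  apply AddSubmonoid.closure_le.mpr (Submodule.subset_span (R := ℤ))
  rw [simpleRoots, AddSubmonoid.closure_image_isAddIndecomposable_baseOf]
  exact AddSubmonoid.subset_closure ⟨⟨x, hx⟩, hfx, rfl⟩

end SimpleRoots

namespace IsSLRS

variable {Φ : Set E} {x y : E}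

lemma inner_self (hΦ : IsSLRS Φ) (hx : x ∈ Φ) : ⟪x, x⟫ = 2 := (hΦ.2.2 x hx x hx).1

lemma ne_zero (hΦ : IsSLRS Φ) (hx : x ∈ Φ) : x ≠ 0 := by
  rintro rfl
  simpa using hΦ.inner_self hx

lemma neg_mem (hΦ : IsSLRS Φ) (hx : x ∈ Φ) : -x ∈ Φ := by
  have h := (hΦ.2.2 x hx x hx).2.2
  rwa [hΦ.inner_self hx, two_smul, sub_add_cancel_left] at h

lemma inner_lt_two (hΦ : IsSLRS Φ) (hx : x ∈ Φ) (hy : y ∈ Φ) (hxy : x ≠ y) : ⟪x, y⟫ < 2 := by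
  have h : 0 < ⟪x - y, x - y⟫ := real_inner_self_pos.mpr (sub_ne_zero.mpr hxy)
  rw [real_inner_sub_sub_self, hΦ.inner_self hx, hΦ.inner_self hy] at h
  linarith

lemma sub_mem_of_inner_pos (hΦ : IsSLRS Φ) (hx : x ∈ Φ) (hy : y ∈ Φ) (hxy : x ≠ y)
    (hpos : 0 < ⟪x, y⟫) : x - y ∈ Φ := by
  obtain ⟨m, hm⟩ := (hΦ.2.2 x hx y hy).2.1
  have hm1 : m = 1 := by
    have := hΦ.inner_lt_two hx hy hxy
    rw [hm] at hpos this
    norm_cast at hpos this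
    omega
  simpa [hm, hm1] using (hΦ.2.2 x hx y hy).2.2

lemma pairwise_inner_nonpos_simpleRoots (hΦ : IsSLRS Φ) (f : E →+ ℝ) (hf : ∀ x ∈ Φ, f x ≠ 0) :
    (simpleRoots Φ f).Pairwise fun x y ↦ ⟪x, y⟫ ≤ 0 := by
  intro x hx y hy hxy
  by_contra! hpos
  have hsub := hΦ.sub_mem_of_inner_pos (simpleRoots_subset Φ f hx) (simpleRoots_subset Φ f hy)
    hxy hpos
  have h0 : (0 : E) ∉ Φ := fun h ↦ hΦ.ne_zero h rfl
  rcases (hf _ hsub).lt_or_gt with hneg | hpos'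
  · refine sub_notMem_of_mem_simpleRoots h0 hy hx ?_ (by simpa using hΦ.neg_mem hsub)
    rwa [← neg_sub, map_neg, neg_pos]
  · exact sub_notMem_of_mem_simpleRoots h0 hx hy hpos' hsub

lemma mem_span_simpleRoots (hΦ : IsSLRS Φ) (f : E →+ ℝ) (hf : ∀ x ∈ Φ, f x ≠ 0)
    (hx : x ∈ Φ) : x ∈ Submodule.span ℤ (simpleRoots Φ f) := by
  have : Finite Φ := hΦ.2.1
  rcases (hf x hx).lt_or_gt with hneg | hxpos
  · have hnegx := mem_span_simpleRoots_of_pos (hΦ.neg_mem hx) (by simpa using hneg)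
    simpa using Submodule.neg_mem _ hnegx
  · exact mem_span_simpleRoots_of_pos hx hxpos

end IsSLRS

theorem exists_base {Φ : Set E} (hΦ : IsSLRS Φ) : ∃ X : Set E, IsBase Φ X := by
  have : Finite Φ := hΦ.2.1
  obtain ⟨f, hf⟩ := Module.exists_dual_forall_apply_ne_zero (K := ℝ) (Subtype.val : Φ → E)
    fun x ↦ hΦ.ne_zero x.2
  have hf' : ∀ x ∈ Φ, f x ≠ 0 := fun x hx ↦ hf ⟨x, hx⟩
  have hobtuse := hΦ.pairwise_inner_nonpos_simpleRoots f hf'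
  refine ⟨simpleRoots Φ f, simpleRoots_subset Φ f,
    linearIndependent_of_pairwise_inner_nonpos f (fun x ↦ pos_of_mem_simpleRoots) hobtuse,
    fun x hx y hy ↦ hobtuse hx hy, fun x hx ↦ hΦ.mem_span_simpleRoots f hf' hx⟩
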